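/- arXiv:1907.01896 — 4 statements merged into one kernel-verified Lean document; each statement's English description precedes it below -/
import Mathlib

section
/- Let l_1, ..., l_m be linear functionals on ℝ^n. Then the function Δ(x) = min_i l_i(x) is non-positive on all of ℝ^n if and only if there exist indices i_1 < ... < i_r and strictly positive real numbers λ_1, ..., λ_r such that λ_1 l_{i_1} + ... + λ_r l_{i_r} = 0. -/
/-! This is Gordan's alternative. Put `L x = (l_i x)_i`; if no `x` makes every `l_i x` positive,
the subspace `range L` of `ℝ^m` misses the open positive orthant, and Hahn–Banach separates the
two by a functional `y ↦ -∑ c_i y_i`. Being bounded below on `range L`, it vanishes there, i.e.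
`∑ c_i l_i = 0`; being negative on the orthant forces `c ≥ 0`, `c ≠ 0`. The support of `c` is the
required subfamily. Conversely, a positive relation evaluated at a point where all `l_i` are
positive would be positive. -/

open Finset

theorem LinearMap.apply_eq_zero_of_forall_le_apply {M : Type*} [AddCommGroup M] [Module ℝ M]
    {V : Submodule ℝ M} (f : M →ₗ[ℝ] ℝ) {u : ℝ} (hf : ∀ v ∈ V, u ≤ f v) {v : M} (hv : v ∈ V) :
    f v = 0 := by
  by_contra hne
  have := hf (((u - 1) / f v) • v) (V.smul_mem _ hv)
  rw [map_smul, smul_eq_mul, div_mul_cancel₀ _ hne] at this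
  linarith

theorem Submodule.exists_nonneg_ne_zero_sum_mul_eq_zero {ι : Type*} [Fintype ι]
    (V : Submodule ℝ (ι → ℝ)) (hV : ∀ v ∈ V, ∃ i, v i ≤ 0) :
    ∃ c : ι → ℝ, 0 ≤ c ∧ c ≠ 0 ∧ ∀ v ∈ V, ∑ i, c i * v i = 0 := by
  classical
  have hdisj : Disjoint (Set.univ.pi fun _ => Set.Ioi (0 : ℝ)) (V : Set (ι → ℝ)) := by
    refine Set.disjoint_left.2 fun v hpos hv => ?_
    obtain ⟨i, hi⟩ := hV v hv
    exact (hi.trans_lt (hpos i (Set.mem_univ i))).false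
  obtain ⟨f, u, hf_pos, hf_V⟩ := geometric_hahn_banach_open
    (convex_pi fun _ _ => convex_Ioi 0) (isOpen_set_pi Set.finite_univ fun _ _ => isOpen_Ioi)
    V.convex hdisj
  have hu : u ≤ 0 := by simpa using hf_V 0 V.zero_mem
  have hf_neg : ∀ y, (∀ i, 0 < y i) → f y < 0 := fun y hy =>
    (hf_pos y fun i _ => hy i).trans_le hu
  have hf_apply : ∀ y, f y = ∑ i, y i * f (Pi.single i 1) := fun y => by
    conv_lhs => rw [← univ_sum_single y]
    refine (map_sum f _ _).trans (sum_congr rfl fun i _ => ?_)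
    rw [← smul_eq_mul, ← map_smul, ← Pi.single_smul', smul_eq_mul, mul_one]
  refine ⟨fun i => -f (Pi.single i 1), fun i => ?_, fun hc => ?_, fun v hv => ?_⟩
  · by_contra! hi
    replace hi : 0 < f (Pi.single i 1) := by simpa using hi
    have hf1 : f 1 < 0 := hf_neg 1 fun _ => one_pos
    -- the scale at which `M • e_i + 1`, a point of the orthant, lands on `ker f`
    set M := -f 1 / f (Pi.single i 1)
    have hM : 0 ≤ M := div_nonneg (by linarith) hi.le
    have := hf_neg (M • Pi.single i 1 + 1) fun j => by
      by_cases hj : j = i <;> simp [hj]; positivity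
    rw [map_add, map_smul, smul_eq_mul, div_mul_cancel₀ _ hi.ne'] at this
    simp at this
  · have h1 := hf_neg 1 fun _ => one_pos
    rw [hf_apply] at h1
    simp [funext_iff] at hc
    simp [hc] at h1
  · have hfv : f v = 0 := f.toLinearMap.apply_eq_zero_of_forall_le_apply hf_V hv
    simp [mul_comm, ← hf_apply, hfv]

theorem LinearMap.exists_nonneg_ne_zero_sum_smul_eq_zero {ι E : Type*} [Fintype ι]
    [AddCommGroup E] [Module ℝ E] (l : ι → E →ₗ[ℝ] ℝ) (h : ∀ x, ∃ i, l i x ≤ 0) :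
    ∃ c : ι → ℝ, 0 ≤ c ∧ c ≠ 0 ∧ ∑ i, c i • l i = 0 := by
  obtain ⟨c, hc_nonneg, hc_ne, hc⟩ :=
    (LinearMap.range (LinearMap.pi l)).exists_nonneg_ne_zero_sum_mul_eq_zero
      (by rintro _ ⟨x, rfl⟩; exact h x)
  exact ⟨c, hc_nonneg, hc_ne, LinearMap.ext fun x => by simpa using hc _ ⟨x, rfl⟩⟩

theorem exists_strictMono_pos_sum_smul_eq_sum_smul {ι R M : Type*} [Fintype ι] [LinearOrder ι]
    [Semiring R] [PartialOrder R] [AddCommMonoid M] [Module R M] (c : ι → R) (v : ι → M)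
    (hc_nonneg : 0 ≤ c) (hc_ne : c ≠ 0) :
    ∃ (r : ℕ) (idx : Fin r → ι) (lam : Fin r → R), 0 < r ∧ StrictMono idx ∧ (∀ j, 0 < lam j) ∧
      ∑ j, lam j • v (idx j) = ∑ i, c i • v i := by
  classical
  set T := univ.filter fun i => c i ≠ 0
  have hT : T.Nonempty := by
    obtain ⟨i, hi⟩ := Function.ne_iff.1 hc_ne
    exact ⟨i, by simpa [T] using hi⟩
  refine ⟨T.card, T.orderEmbOfFin rfl, fun j => c (T.orderEmbOfFin rfl j), hT.card_pos,
    (T.orderEmbOfFin rfl).strictMono, fun j => ?_, ?_⟩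
  · have := T.orderEmbOfFin_mem rfl j
    simp only [T, mem_filter] at this
    exact (hc_nonneg _).lt_of_ne' this.2
  · calc ∑ j, c (T.orderEmbOfFin rfl j) • v (T.orderEmbOfFin rfl j)
        = ∑ i : T, c i • v i :=
          Fintype.sum_equiv (T.orderIsoOfFin rfl).toEquiv _ (fun i : T => c i • v i) fun _ => rfl
      _ = ∑ i ∈ T, c i • v i := sum_coe_sort T fun i => c i • v i
      _ = ∑ i, c i • v i := sum_filter_of_ne fun i _ hi h => hi (by simp [h])

/-- `min_i l_i(x) ≤ 0` for all `x ∈ ℝ^n` iff there is a strictly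
convex linear relation between some nonempty subfamily of the `l_i`. -/
theorem min_nonpos_iff_convex_relation (n m : ℕ) [NeZero m]
    (l : Fin m → (EuclideanSpace ℝ (Fin n)) →ₗ[ℝ] ℝ) :
    (∀ x : EuclideanSpace ℝ (Fin n),
        Finset.univ.inf' Finset.univ_nonempty (fun i => l i x) ≤ 0) ↔
    ∃ (r : ℕ) (idx : Fin r → Fin m) (lam : Fin r → ℝ),
      0 < r ∧ StrictMono idx ∧ (∀ j, 0 < lam j) ∧
      ∑ j, lam j • l (idx j) = 0 := by
  refine ⟨fun h => ?_, ?_⟩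
  · have h_nonpos : ∀ x, ∃ i, l i x ≤ 0 := fun x => by
      simpa using (inf'_le_iff _).1 (h x)
    obtain ⟨c, hc_nonneg, hc_ne, hc⟩ := LinearMap.exists_nonneg_ne_zero_sum_smul_eq_zero l h_nonpos
    obtain ⟨r, idx, lam, hr, hidx, hlam, hsum⟩ :=
      exists_strictMono_pos_sum_smul_eq_sum_smul c l hc_nonneg hc_ne
    exact ⟨r, idx, lam, hr, hidx, hlam, hsum.trans hc⟩
  · rintro ⟨r, idx, lam, hr, -, hlam, hsum⟩ x
    by_contra! hpos
    have : NeZero r := ⟨hr.ne'⟩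
    have hsum_pos : 0 < (∑ j, lam j • l (idx j)) x := by
      simpa using sum_pos (fun j _ => mul_pos (hlam j) ((lt_inf'_iff _).1 hpos _ (mem_univ _)))
        univ_nonempty
    simp [hsum] at hsum_pos
end

section
/- Let v_1, ..., v_m be nonzero vectors in a finite-dimensional inner product space such that the union of the half-spaces H_i = { x : ⟨v_i, x⟩ ≤ 0 } is the whole space. Then the origin 0 belongs to the convex hull of {v_1, ..., v_m}. -/
open scoped RealInnerProductSpace

theorem exists_forall_inner_pos_of_zero_notMem {V : Type*} [NormedAddCommGroup V]
    [InnerProductSpace ℝ V] [CompleteSpace V] {s : Set V} (hconv : Convex ℝ s)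
    (hclosed : IsClosed s) (h0 : (0 : V) ∉ s) : ∃ w : V, ∀ y ∈ s, 0 < ⟪w, y⟫ := by
  obtain ⟨f, u, hf0, hfs⟩ := geometric_hahn_banach_point_closed hconv hclosed h0
  refine ⟨(InnerProductSpace.toDual ℝ V).symm f, fun y hy => ?_⟩
  rw [InnerProductSpace.toDual_symm_apply]
  have hu : (0 : ℝ) < u := by simpa using hf0
  exact hu.trans (hfs y hy)

theorem zero_mem_convexHull_of_halfspaces_cover_general
    {V : Type*} [NormedAddCommGroup V] [InnerProductSpace ℝ V]
    [FiniteDimensional ℝ V] (m : ℕ) (v : Fin m → V)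
    (hcover : ∀ x : V, ∃ i, ⟪v i, x⟫ ≤ 0) :
    (0 : V) ∈ convexHull ℝ (Set.range v) := by
  by_contra h0
  obtain ⟨w, hw⟩ := exists_forall_inner_pos_of_zero_notMem (convex_convexHull ℝ _)
    (((Set.finite_range v).isCompact_convexHull (𝕜 := ℝ)).isClosed) h0
  obtain ⟨i, hi⟩ := hcover w
  have hpos := hw (v i) (subset_convexHull ℝ _ ⟨i, rfl⟩)
  rw [real_inner_comm] at hi
  exact hi.not_gt hpos

/-- if the half-spaces `H_i = {x : ⟪v_i, x⟫ ≤ 0}` of nonzero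
vectors `v_1, …, v_m` cover the whole finite-dimensional inner product space,
then `0` lies in the convex hull of the `v_i`. -/
theorem zero_mem_convexHull_of_halfspaces_cover
    {V : Type*} [NormedAddCommGroup V] [InnerProductSpace ℝ V]
    [FiniteDimensional ℝ V] (m : ℕ) (v : Fin m → V) (hv : ∀ i, v i ≠ 0)
    (hcover : ∀ x : V, ∃ i, ⟪v i, x⟫ ≤ 0) :
    (0 : V) ∈ convexHull ℝ (Set.range v) :=
  zero_mem_convexHull_of_halfspaces_cover_general m v hcover
end

section
/- The twelve points of ℝ^3 given by the vertices of a regular icosahedron inscribed in the unit sphere have pairwise Euclidean distances at least √(2 − 2/√5), and consequently twelve balls of radius r = 1/(√((5+√5)/2) − 1) centered at the points (1+r)·v_i (v_i the icosahedron vertices) are pairwise non-overlapping and each tangent to the unit ball. -/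
/-!
Up to the factor `1 / √(φ + 2)`, the vertices are the cyclic permutations of `(0, ±1, ±φ)`.
Two distinct ones have inner product at most `φ`, so the cosine of the angle between distinct
unit vertices is at most `φ / (φ + 2) = 1 / √5`, and the chord length is at least
`√(2 - 2 / √5) = 2 / s` with `s = √((5 + √5) / 2)`. Scaling by `1 + r = s / (s - 1)` turns
this chord into `2 / (s - 1) = 2 r`, the separation needed by two balls of radius `r`.
-/

open Real

/-- The golden ratio. -/
noncomputable def goldenφ : ℝ := (1 + Real.sqrt 5) / 2

/-- The 12 vertices of a regular icosahedron inscribed in the unit sphere. -/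
noncomputable def icoVert : Fin 12 → EuclideanSpace ℝ (Fin 3) := fun i =>
  (Real.sqrt (1 + goldenφ ^ 2))⁻¹ •
    (WithLp.equiv 2 (Fin 3 → ℝ)).symm
      (![![0, 1, goldenφ], ![0, 1, -goldenφ], ![0, -1, goldenφ], ![0, -1, -goldenφ],
         ![1, goldenφ, 0], ![1, -goldenφ, 0], ![-1, goldenφ, 0], ![-1, -goldenφ, 0],
         ![goldenφ, 0, 1], ![-goldenφ, 0, 1], ![goldenφ, 0, -1], ![-goldenφ, 0, -1]] i)

open scoped goldenRatio RealInnerProductSpace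

theorem dist_eq_sqrt_two_sub_inner {E : Type*} [NormedAddCommGroup E] [InnerProductSpace ℝ E]
    {u v : E} (hu : ‖u‖ = 1) (hv : ‖v‖ = 1) : dist u v = √(2 - 2 * ⟪u, v⟫) := by
  rw [dist_eq_norm, ← sqrt_sq (norm_nonneg _), norm_sub_sq_real, hu, hv]
  ring_nf

theorem goldenφ_eq_goldenRatio : goldenφ = φ := rfl

noncomputable def icoVertUnscaled (i : Fin 12) : EuclideanSpace ℝ (Fin 3) :=
  WithLp.toLp 2
    (![![0, 1, φ], ![0, 1, -φ], ![0, -1, φ], ![0, -1, -φ],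
       ![1, φ, 0], ![1, -φ, 0], ![-1, φ, 0], ![-1, -φ, 0],
       ![φ, 0, 1], ![-φ, 0, 1], ![φ, 0, -1], ![-φ, 0, -1]] i)

theorem icoVert_eq_smul (i : Fin 12) :
    icoVert i = (√(φ + 2))⁻¹ • icoVertUnscaled i := by
  have h : 1 + goldenφ ^ 2 = φ + 2 := by
    rw [goldenφ_eq_goldenRatio, goldenRatio_sq]; ring
  rw [← h]; rfl

theorem inner_icoVertUnscaled (i j : Fin 12) :
    ⟪icoVertUnscaled i, icoVertUnscaled j⟫ = ∑ k, icoVertUnscaled i k * icoVertUnscaled j k := by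
  simp only [PiLp.inner_apply, RCLike.inner_apply, ringHom_apply, mul_comm]

theorem inner_icoVertUnscaled_self (i : Fin 12) :
    ⟪icoVertUnscaled i, icoVertUnscaled i⟫ = φ + 2 := by
  rw [inner_icoVertUnscaled, Fin.sum_univ_three]
  fin_cases i <;>
    simp only [Fin.zero_eta, Fin.mk_one, Fin.reduceFinMk, icoVertUnscaled, Matrix.cons_val,
      Matrix.cons_val_zero, Matrix.cons_val_one] <;>
    linear_combination goldenRatio_sq

theorem inner_icoVertUnscaled_le {i j : Fin 12} (hij : i ≠ j) :
    ⟪icoVertUnscaled i, icoVertUnscaled j⟫ ≤ φ := by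
  rw [inner_icoVertUnscaled, Fin.sum_univ_three]
  fin_cases i <;> fin_cases j <;>
    simp only [ne_eq, not_true_eq_false, Fin.zero_eta, Fin.mk_one, Fin.reduceFinMk,
      icoVertUnscaled, Matrix.cons_val, Matrix.cons_val_zero, Matrix.cons_val_one] at hij ⊢ <;>
    nlinarith [goldenRatio_sq, one_lt_goldenRatio]

theorem norm_icoVert (i : Fin 12) : ‖icoVert i‖ = 1 := by
  have hpos : 0 < φ + 2 := by linarith [goldenRatio_pos]
  rw [icoVert_eq_smul, norm_smul, ← sqrt_sq (norm_nonneg (icoVertUnscaled i)),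
    ← real_inner_self_eq_norm_sq, inner_icoVertUnscaled_self, norm_inv,
    norm_of_nonneg (sqrt_nonneg _), inv_mul_cancel₀ (sqrt_pos.2 hpos).ne']

theorem goldenRatio_div_goldenRatio_add_two : φ / (φ + 2) = 1 / √5 := by
  have h5 : √5 ^ 2 = 5 := sq_sqrt (by norm_num)
  have h5pos : 0 < √5 := by positivity
  rw [div_eq_div_iff (by linarith [goldenRatio_pos]) h5pos.ne', goldenRatio]
  linear_combination h5 / 2

theorem inner_icoVert_le {i j : Fin 12} (hij : i ≠ j) : ⟪icoVert i, icoVert j⟫ ≤ 1 / √5 := by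
  have hpos : 0 < φ + 2 := by linarith [goldenRatio_pos]
  rw [icoVert_eq_smul, icoVert_eq_smul, real_inner_smul_left, real_inner_smul_right, ← mul_assoc,
    ← mul_inv, mul_self_sqrt hpos.le, ← goldenRatio_div_goldenRatio_add_two, inv_mul_eq_div]
  exact div_le_div_of_nonneg_right (inner_icoVertUnscaled_le hij) hpos.le

theorem one_lt_sqrt_five_add_sqrt_five_div_two : 1 < √((5 + √5) / 2) := by
  rw [lt_sqrt zero_le_one]
  linarith [sqrt_nonneg 5]

theorem one_add_mul_sqrt_two_sub_two_div_sqrt_five (r : ℝ) (hr : r = 1 / (√((5 + √5) / 2) - 1)) :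
    (1 + r) * √(2 - 2 / √5) = 2 * r := by
  set s := √((5 + √5) / 2)
  have h5 : √5 ^ 2 = 5 := sq_sqrt (by norm_num)
  have h5pos : 0 < √5 := by positivity
  have hs : s ^ 2 = (5 + √5) / 2 := sq_sqrt (by positivity)
  have hs1 : 1 < s := one_lt_sqrt_five_add_sqrt_five_div_two
  have hs0 : s ≠ 0 := (zero_lt_one.trans hs1).ne'
  have hs1' : s - 1 ≠ 0 := (sub_pos.2 hs1).ne'
  have hsqrt : √(2 - 2 / √5) = 2 / s := by
    rw [← sqrt_sq (by positivity : 0 ≤ 2 / s), div_pow, hs]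
    congr 1
    field_simp
    nlinarith
  rw [hsqrt, hr]
  field_simp
  ring

/-- the icosahedron vertices lie on the unit sphere with pairwise
distances at least `√(2 − 2/√5)`; consequently the twelve balls of radius
`r = 1/(√((5+√5)/2) − 1)` centered at `(1+r)·v_i` are pairwise non-overlapping
and each tangent to the unit ball. -/
theorem icosahedral_cluster (r : ℝ)
    (hr : r = 1 / (Real.sqrt ((5 + Real.sqrt 5) / 2) - 1)) :
    (∀ i, ‖icoVert i‖ = 1) ∧
    (∀ i j, i ≠ j → Real.sqrt (2 - 2 / Real.sqrt 5) ≤ dist (icoVert i) (icoVert j)) ∧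
    (∀ i j, i ≠ j → 2 * r ≤ dist ((1 + r) • icoVert i) ((1 + r) • icoVert j)) ∧
    (∀ i, dist ((1 + r) • icoVert i) (0 : EuclideanSpace ℝ (Fin 3)) = 1 + r) := by
  have hr1 : 0 ≤ 1 + r := by
    rw [hr]
    linarith [one_div_pos.2 (sub_pos.2 one_lt_sqrt_five_add_sqrt_five_div_two)]
  have separated : ∀ i j, i ≠ j → √(2 - 2 / √5) ≤ dist (icoVert i) (icoVert j) := fun i j hij => by
    rw [dist_eq_sqrt_two_sub_inner (norm_icoVert i) (norm_icoVert j), div_eq_mul_one_div 2]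
    exact sqrt_le_sqrt (by linarith [inner_icoVert_le hij])
  refine ⟨norm_icoVert, separated, fun i j hij => ?_, fun i => ?_⟩
  · rw [dist_smul₀, norm_of_nonneg hr1, ← one_add_mul_sqrt_two_sub_two_div_sqrt_five r hr]
    exact mul_le_mul_of_nonneg_left (separated i j hij) hr1
  · rw [dist_zero_right, norm_smul, norm_icoVert, norm_of_nonneg hr1, mul_one]
end

section
/- Let F_1, ..., F_m : ℝ^n → ℝ with F_u(x) = l_u(x) + q_u(x), where l_u are linear forms and q_u quadratic forms. Suppose there exist λ_1, ..., λ_m > 0 with λ_1 l_1 + ... + λ_m l_m = 0, the span of l_1,...,l_m has dimension m−1, and the quadratic form Q = λ_1 q_1 + ... + λ_m q_m is negative definite on E = ⋂_u ker l_u. Then the origin is a strict local maximum of F(x) := min_u F_u(x): there is a neighborhood of 0 on which F(x) < F(0) = 0 for all x ≠ 0. -/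
/-! Since `∑ λ_u l_u = 0`, the weighted sum `∑ λ_u F_u` is the quadratic form `Q`. Fix a unit
direction `a`. If some `l_u a < 0`, then `F_u (t a) = t (l_u a + t q_u a) < 0` for small `t > 0`.
Otherwise all `l_u a ≥ 0`, and the relation with positive weights forces `a ∈ E`, so `Q a < 0`
and `∑ λ_u F_u (t a) = t² Q a < 0`. Both alternatives are open conditions in `(t, a)`, so
compactness of the unit sphere makes the admissible range of `t` uniform in `a`. -/

open Filter Topology

theorem QuadraticMap.continuous_of_finiteDimensional {V : Type*} [NormedAddCommGroup V]
    [NormedSpace ℝ V] [FiniteDimensional ℝ V] (Q : QuadraticForm ℝ V) : Continuous Q := by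
  let B : V →L[ℝ] V →L[ℝ] ℝ :=
    (LinearMap.toContinuousLinearMap.toLinearMap ∘ₗ QuadraticMap.associated Q).toContinuousLinearMap
  convert B.continuous.clm_apply continuous_id with x
  exact (QuadraticMap.associated_eq_self_apply ℝ Q x).symm

theorem exists_neg_of_sum_mul_neg {ι : Type*} [Fintype ι] {lam f : ι → ℝ}
    (hlam : ∀ i, 0 < lam i) (h : ∑ i, lam i * f i < 0) : ∃ i, f i < 0 := by
  obtain ⟨i, -, hi⟩ := Finset.exists_lt_of_sum_lt (s := Finset.univ)
    (f := fun i => lam i * f i) (g := 0) (by simpa using h)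
  exact ⟨i, neg_of_mul_neg_right hi (hlam i).le⟩

section AddCommGroup

variable {ι V : Type*} [Fintype ι] [AddCommGroup V] [Module ℝ V]
  (l : ι → V →ₗ[ℝ] ℝ) (q : ι → QuadraticForm ℝ V) {lam : ι → ℝ}

theorem sum_mul_add_eq_of_sum_smul_eq_zero (hrel : ∑ i, lam i • l i = 0) (x : V) :
    ∑ i, lam i * (l i x + q i x) = (∑ i, lam i • q i) x := by
  have hl : ∑ i, lam i * l i x = 0 := by simpa using LinearMap.congr_fun hrel x
  simp [mul_add, Finset.sum_add_distrib, hl]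

theorem exists_neg_or_sum_smul_neg_of_ne_zero (hlam : ∀ i, 0 < lam i) (hrel : ∑ i, lam i • l i = 0)
    (hneg : ∀ ξ ∈ ⨅ i, LinearMap.ker (l i), ξ ≠ 0 → (∑ i, lam i • q i) ξ < 0)
    {a : V} (ha : a ≠ 0) : (∃ i, l i a < 0) ∨ (∑ i, lam i • q i) a < 0 := by
  by_contra! h
  obtain ⟨hl, hQ⟩ := h
  have hsum : ∑ i, lam i * l i a = 0 := by simpa using LinearMap.congr_fun hrel a
  have hker : ∀ i, l i a = 0 := fun i =>
    (mul_eq_zero.1 ((Finset.sum_eq_zero_iff_of_nonneg fun j _ =>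
      mul_nonneg (hlam j).le (hl j)).1 hsum i (Finset.mem_univ i))).resolve_left (hlam i).ne'
  exact (hneg a (Submodule.mem_iInf _ |>.2 hker) ha).not_ge hQ

end AddCommGroup

section NormedSpace

variable {ι V : Type*} [Fintype ι] [NormedAddCommGroup V] [NormedSpace ℝ V]
  [FiniteDimensional ℝ V] (l : ι → V →ₗ[ℝ] ℝ) (q : ι → QuadraticForm ℝ V) {lam : ι → ℝ}

theorem exists_forall_ne_zero_exists_add_neg (hlam : ∀ i, 0 < lam i)
    (hrel : ∑ i, lam i • l i = 0)
    (hdir : ∀ a ≠ 0, (∃ i, l i a < 0) ∨ (∑ i, lam i • q i) a < 0) :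
    ∃ ε > 0, ∀ x : V, ‖x‖ < ε → x ≠ 0 → ∃ i, l i x + q i x < 0 := by
  have hsphere : ∀ᶠ t in 𝓝 (0 : ℝ), ∀ b ∈ Metric.sphere (0 : V) 1, 0 < t →
      ∃ i, l i (t • b) + q i (t • b) < 0 := by
    refine (isCompact_sphere 0 1).eventually_forall_of_forall_eventually fun a ha => ?_
    rcases hdir a (ne_zero_of_mem_sphere one_ne_zero ⟨a, ha⟩) with ⟨i, hi⟩ | hQ
    · have hcont : Continuous fun z : ℝ × V => l i z.2 + z.1 * q i z.2 :=
        ((l i).continuous_of_finiteDimensional.comp continuous_snd).add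
          (continuous_fst.mul ((q i).continuous_of_finiteDimensional.comp continuous_snd))
      filter_upwards [hcont.continuousAt.eventually_lt continuousAt_const (by simpa using hi)]
        with z hz ht
      refine ⟨i, ?_⟩
      rw [map_smul, QuadraticMap.map_smul, smul_eq_mul, smul_eq_mul]
      nlinarith
    · have hcont : Continuous fun z : ℝ × V => (∑ i, lam i • q i) z.2 :=
        (QuadraticMap.continuous_of_finiteDimensional _).comp continuous_snd
      filter_upwards [hcont.continuousAt.eventually_lt continuousAt_const (by simpa using hQ)]
        with z hz ht
      refine exists_neg_of_sum_mul_neg hlam ?_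
      rw [sum_mul_add_eq_of_sum_smul_eq_zero l q hrel, QuadraticMap.map_smul, smul_eq_mul]
      exact mul_neg_of_pos_of_neg (by positivity) hz
  obtain ⟨ε, hε, h⟩ := Metric.eventually_nhds_iff.1 hsphere
  refine ⟨ε, hε, fun x hx hx0 => ?_⟩
  have hxpos : 0 < ‖x‖ := norm_pos_iff.2 hx0
  simpa [smul_smul, hxpos.ne'] using
    h (by simpa using hx) (‖x‖⁻¹ • x) (by simp [norm_smul, hxpos.ne']) hxpos

end NormedSpace

theorem strict_local_max_of_neg_def_general (n m : ℕ) [NeZero m]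
    (l : Fin m → (EuclideanSpace ℝ (Fin n)) →ₗ[ℝ] ℝ)
    (q : Fin m → QuadraticForm ℝ (EuclideanSpace ℝ (Fin n)))
    (lam : Fin m → ℝ) (hlam : ∀ u, 0 < lam u)
    (hrel : ∑ u, lam u • l u = 0)
    (hneg : ∀ ξ ∈ ⨅ u, LinearMap.ker (l u), ξ ≠ 0 → (∑ u, lam u • q u) ξ < 0) :
    ∃ ε > 0, ∀ x : EuclideanSpace ℝ (Fin n), ‖x‖ < ε → x ≠ 0 →
      Finset.univ.inf' Finset.univ_nonempty (fun u => l u x + q u x) < 0 := by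
  obtain ⟨ε, hε, h⟩ := exists_forall_ne_zero_exists_add_neg l q hlam hrel
    fun a ha => exists_neg_or_sum_smul_neg_of_ne_zero l q hlam hrel hneg ha
  refine ⟨ε, hε, fun x hx hx0 => ?_⟩
  obtain ⟨u, hu⟩ := h x hx hx0
  exact (Finset.inf'_le _ (Finset.mem_univ u)).trans_lt hu

/-- Proposition, sufficiency: for linear-quadratic functions
`F_u = l_u + q_u` with a strictly convex relation `∑ λ_u l_u = 0`, the span of
the `l_u` of dimension `m − 1`, and `Q = ∑ λ_u q_u` negative definite on
`E = ⋂ ker l_u`, the origin is a strict local maximum of `F = min_u F_u`. -/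
theorem strict_local_max_of_neg_def (n m : ℕ) [NeZero m]
    (l : Fin m → (EuclideanSpace ℝ (Fin n)) →ₗ[ℝ] ℝ)
    (q : Fin m → QuadraticForm ℝ (EuclideanSpace ℝ (Fin n)))
    (lam : Fin m → ℝ) (hlam : ∀ u, 0 < lam u)
    (hrel : ∑ u, lam u • l u = 0)
    (hdim : Module.finrank ℝ (Submodule.span ℝ (Set.range l)) = m - 1)
    (hneg : ∀ ξ ∈ ⨅ u, LinearMap.ker (l u), ξ ≠ 0 → (∑ u, lam u • q u) ξ < 0) :
    ∃ ε > 0, ∀ x : EuclideanSpace ℝ (Fin n), ‖x‖ < ε → x ≠ 0 →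
      Finset.univ.inf' Finset.univ_nonempty (fun u => l u x + q u x) < 0 :=
  strict_local_max_of_neg_def_general n m l q lam hlam hrel hneg
end
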